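/- arXiv:math/0403167 — 2 statements merged into one kernel-verified Lean document; each statement's English description precedes it below -/
import Mathlib

section
/- For |q|<1 and complex z, ω, the double sum ∑_{n₁,n₂≥0} ω^{n₂} q^{n₁² + 2n₁n₂ + 2n₂² + n₁ + n₂} / ((q²;q²)_{n₁} (q²;q²)_{n₂}) equals ∑_{n≥0} q^{n²+n} (-ωq;q²)_n / (q²;q²)_n. -/
open scoped BigOperators

/-- Finite q-Pochhammer symbol `(a;q)_n`. -/
noncomputable def qPoch (a q : ℂ) (n : ℕ) : ℂ := ∏ j ∈ Finset.range n, (1 - a * q ^ j)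

/-- Infinite q-Pochhammer symbol `(a;q)_∞`. -/
noncomputable def qPochInf (a q : ℂ) : ℂ := ∏' j : ℕ, (1 - a * q ^ j)

namespace Stmt11Aux

open Finset

/-- Gaussian binomial coefficient with base `Q`, via the Pascal recurrence. -/
noncomputable def gb (Q : ℂ) : ℕ → ℕ → ℂ
  | 0, 0 => 1
  | 0, _ + 1 => 0
  | _ + 1, 0 => 1
  | n + 1, k + 1 => gb Q n (k + 1) + Q ^ (n - k) * gb Q n k

lemma gb_zero_right (Q : ℂ) (n : ℕ) : gb Q n 0 = 1 := by
  cases n <;> simp [gb]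

lemma gb_succ_succ (Q : ℂ) (n k : ℕ) :
    gb Q (n + 1) (k + 1) = gb Q n (k + 1) + Q ^ (n - k) * gb Q n k := by
  simp [gb]

lemma gb_eq_zero (Q : ℂ) : ∀ n k : ℕ, n < k → gb Q n k = 0 := by
  intro n
  induction n with
  | zero =>
    intro k hk
    match k, hk with
    | k + 1, _ => simp [gb]
  | succ n ih =>
    intro k hk
    match k, hk with
    | k + 1, hk =>
      rw [gb_succ_succ, ih (k + 1) (by omega), ih k (by omega)]
      ring

lemma qPoch_succ (a q : ℂ) (n : ℕ) :
    qPoch a q (n + 1) = qPoch a q n * (1 - a * q ^ n) := Finset.prod_range_succ _ _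

lemma qPoch_zero (a q : ℂ) : qPoch a q 0 = 1 := Finset.prod_range_zero _

/-- q-binomial theorem (finite form). -/
lemma lemA (q ω : ℂ) (n : ℕ) :
    qPoch (-(ω * q)) (q ^ 2) n
      = ∑ k ∈ Finset.range (n + 1), gb (q ^ 2) n k * q ^ (k ^ 2) * ω ^ k := by
  induction n with
  | zero => simp [qPoch, gb]
  | succ n ih =>
    rw [qPoch_succ, ih]
    set S : ℂ := ∑ k ∈ Finset.range (n + 1), gb (q ^ 2) n k * q ^ (k ^ 2) * ω ^ k with hS
    have t1 : ∑ k ∈ Finset.range (n + 2), gb (q ^ 2) (n + 1) k * q ^ (k ^ 2) * ω ^ k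
        = (∑ k ∈ Finset.range (n + 1),
            gb (q ^ 2) (n + 1) (k + 1) * q ^ ((k + 1) ^ 2) * ω ^ (k + 1))
          + gb (q ^ 2) (n + 1) 0 * q ^ (0 ^ 2) * ω ^ 0 :=
      Finset.sum_range_succ' _ (n + 1)
    have hsplit : ∀ k ∈ Finset.range (n + 1),
        gb (q ^ 2) (n + 1) (k + 1) * q ^ ((k + 1) ^ 2) * ω ^ (k + 1)
          = gb (q ^ 2) n (k + 1) * q ^ ((k + 1) ^ 2) * ω ^ (k + 1)
            + (ω * q ^ (2 * n + 1)) * (gb (q ^ 2) n k * q ^ (k ^ 2) * ω ^ k) := by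
      intro k hk
      rw [Finset.mem_range] at hk
      have hpow : (q ^ 2) ^ (n - k) * q ^ ((k + 1) ^ 2) = q ^ (2 * n + 1) * q ^ (k ^ 2) := by
        rw [← pow_mul, ← pow_add, ← pow_add]
        congr 1
        have hkn : k ≤ n := by omega
        obtain ⟨m, rfl⟩ := Nat.le.dest hkn
        simp only [Nat.add_sub_cancel_left]
        ring
      rw [gb_succ_succ]
      linear_combination (gb (q ^ 2) n k * ω ^ (k + 1)) * hpow
    have t2 : ∑ k ∈ Finset.range (n + 1),
          gb (q ^ 2) (n + 1) (k + 1) * q ^ ((k + 1) ^ 2) * ω ^ (k + 1)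
        = (∑ k ∈ Finset.range (n + 1),
            gb (q ^ 2) n (k + 1) * q ^ ((k + 1) ^ 2) * ω ^ (k + 1))
          + (ω * q ^ (2 * n + 1)) * S := by
      rw [Finset.sum_congr rfl hsplit, Finset.sum_add_distrib, ← Finset.mul_sum]
    have e1 : ∑ k ∈ Finset.range (n + 2), gb (q ^ 2) n k * q ^ (k ^ 2) * ω ^ k
        = (∑ k ∈ Finset.range (n + 1),
            gb (q ^ 2) n (k + 1) * q ^ ((k + 1) ^ 2) * ω ^ (k + 1))
          + gb (q ^ 2) n 0 * q ^ (0 ^ 2) * ω ^ 0 :=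
      Finset.sum_range_succ' _ (n + 1)
    have e2 : ∑ k ∈ Finset.range (n + 2), gb (q ^ 2) n k * q ^ (k ^ 2) * ω ^ k = S := by
      rw [Finset.sum_range_succ, gb_eq_zero (q ^ 2) n (n + 1) (by omega)]
      rw [← hS]
      ring
    have hf0 : gb (q ^ 2) (n + 1) 0 * q ^ (0 ^ 2) * ω ^ 0 = 1 := by
      rw [gb_zero_right]; simp
    have hg0 : gb (q ^ 2) n 0 * q ^ (0 ^ 2) * ω ^ 0 = 1 := by
      rw [gb_zero_right]; simp
    have hqq : (q ^ 2) ^ n * q = q ^ (2 * n + 1) := by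
      rw [← pow_mul]
      exact (pow_succ q (2 * n)).symm
    linear_combination -t1 - t2 + e1 - e2 + (ω * S) * hqq - hf0 + hg0

/-- `gb` agrees with the ratio of q-Pochhammer symbols. -/
lemma lemB (Q : ℂ) : ∀ n k : ℕ, k ≤ n →
    gb Q n k * (qPoch Q Q k * qPoch Q Q (n - k)) = qPoch Q Q n := by
  intro n
  induction n with
  | zero =>
    intro k hk
    interval_cases k
    simp [gb, qPoch]
  | succ n ih =>
    intro k hk
    match k with
    | 0 =>
      rw [gb_zero_right, qPoch_zero, Nat.sub_zero]
      ring
    | k + 1 =>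
      rcases Nat.lt_or_ge (k + 1) (n + 1) with h | h
      · -- k + 1 ≤ n
        have e1 := ih (k + 1) (by omega)
        have e2 := ih k (by omega)
        have hs1 : n + 1 - (k + 1) = (n - (k + 1)) + 1 := by omega
        have hs2 : n - k = (n - (k + 1)) + 1 := by omega
        rw [gb_succ_succ, hs1, qPoch_succ Q Q (n - (k + 1)), qPoch_succ Q Q k,
          qPoch_succ Q Q n]
        rw [qPoch_succ Q Q k] at e1
        rw [hs2, qPoch_succ] at e2
        have hp1 : Q * Q ^ (n - (k + 1)) = Q ^ (n - k) := by
          rw [← pow_succ']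
          congr 1
          omega
        have hp2 : Q ^ (n - k) * (Q * Q ^ k) = Q * Q ^ n := by
          rw [← pow_succ', ← pow_succ', ← pow_add]
          congr 1
          omega
        linear_combination (1 - Q * Q ^ (n - (k + 1))) * e1
          + (Q ^ (n - k) * (1 - Q * Q ^ k)) * e2
          - qPoch Q Q n * hp1 - qPoch Q Q n * hp2
      · -- k = n
        have hkn : k = n := by omega
        subst hkn
        have hgb2 : gb Q (k + 1) (k + 1) = gb Q k k := by
          rw [gb_succ_succ, gb_eq_zero Q k (k + 1) (by omega), Nat.sub_self, pow_zero]
          ring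
        rw [Nat.sub_self, qPoch_zero, hgb2, qPoch_succ]
        have e2 := ih k le_rfl
        rw [Nat.sub_self, qPoch_zero] at e2
        linear_combination (1 - Q * Q ^ k) * e2

lemma qPoch_sq_ne_zero {q : ℂ} (hq : ‖q‖ < 1) (m : ℕ) :
    qPoch (q ^ 2) (q ^ 2) m ≠ 0 := by
  unfold qPoch
  rw [Finset.prod_ne_zero_iff]
  intro j _ h0
  have h1 : q ^ 2 * (q ^ 2) ^ j = 1 := by linear_combination -h0
  have h2 : ‖q ^ 2 * (q ^ 2) ^ j‖ < 1 := by
    rw [norm_mul, norm_pow, norm_pow, norm_pow]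
    have ha0 : (0 : ℝ) ≤ ‖q‖ := norm_nonneg q
    have h3 : ‖q‖ ^ 2 < 1 := pow_lt_one₀ ha0 hq (by norm_num)
    have h4 : (‖q‖ ^ 2) ^ j ≤ 1 := pow_le_one₀ (by positivity) h3.le
    calc ‖q‖ ^ 2 * (‖q‖ ^ 2) ^ j
        ≤ ‖q‖ ^ 2 * 1 := by
          exact mul_le_mul_of_nonneg_left h4 (by positivity)
      _ < 1 := by rwa [mul_one]
  rw [h1] at h2
  simp at h2

lemma qPoch_sq_norm_ge {q : ℂ} (hq : ‖q‖ < 1) (m : ℕ) :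
    (1 - ‖q‖ ^ 2) ^ m ≤ ‖qPoch (q ^ 2) (q ^ 2) m‖ := by
  unfold qPoch
  rw [norm_prod]
  have hconst : (1 - ‖q‖ ^ 2) ^ m
      = ∏ _j ∈ Finset.range m, (1 - ‖q‖ ^ 2) := by
    rw [Finset.prod_const, Finset.card_range]
  rw [hconst]
  have ha0 : (0 : ℝ) ≤ ‖q‖ := norm_nonneg q
  have h3 : ‖q‖ ^ 2 < 1 := pow_lt_one₀ ha0 hq (by norm_num)
  apply Finset.prod_le_prod
  · intro i _
    linarith
  · intro i _
    have h1 : ‖q ^ 2 * (q ^ 2) ^ i‖ ≤ ‖q‖ ^ 2 := by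
      rw [norm_mul, norm_pow, norm_pow, norm_pow]
      have h4 : (‖q‖ ^ 2) ^ i ≤ 1 := pow_le_one₀ (by positivity) h3.le
      calc ‖q‖ ^ 2 * (‖q‖ ^ 2) ^ i
          ≤ ‖q‖ ^ 2 * 1 := mul_le_mul_of_nonneg_left h4 (by positivity)
        _ = ‖q‖ ^ 2 := by rw [mul_one]
    have h2 : 1 - ‖q ^ 2 * (q ^ 2) ^ i‖
        ≤ ‖1 - q ^ 2 * (q ^ 2) ^ i‖ := by
      have := norm_sub_norm_le (1 : ℂ) (q ^ 2 * (q ^ 2) ^ i)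
      simpa using this
    linarith

lemma summable_gauss (A r : ℝ) (hA : 0 ≤ A) (hr0 : 0 ≤ r) (hr : r < 1) :
    Summable (fun n : ℕ => A ^ n * r ^ (n ^ 2)) := by
  apply summable_of_ratio_norm_eventually_le (r := 1 / 2) (by norm_num)
  have h2 : Filter.Tendsto (fun n : ℕ => A * r * (r ^ 2) ^ n) Filter.atTop (nhds 0) := by
    have hbase : Filter.Tendsto (fun n : ℕ => (r ^ 2) ^ n) Filter.atTop (nhds 0) :=
      tendsto_pow_atTop_nhds_zero_of_lt_one (by positivity) (by nlinarith)
    simpa using hbase.const_mul (A * r)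
  have h3 : ∀ᶠ n in Filter.atTop, A * r * (r ^ 2) ^ n < 1 / 2 :=
    h2.eventually_lt_const (by norm_num)
  filter_upwards [h3] with n hn
  have e : A ^ (n + 1) * r ^ ((n + 1) ^ 2)
      = (A * r * (r ^ 2) ^ n) * (A ^ n * r ^ (n ^ 2)) := by
    rw [show (n + 1) ^ 2 = n ^ 2 + (2 * n + 1) from by ring, pow_add r (n ^ 2) (2 * n + 1),
      pow_succ r (2 * n), pow_mul r 2 n, pow_succ A n]
    ring
  rw [Real.norm_eq_abs, Real.norm_eq_abs, abs_of_nonneg (by positivity),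
    abs_of_nonneg (by positivity), e]
  have hterm : (0 : ℝ) ≤ A ^ n * r ^ (n ^ 2) := by positivity
  exact mul_le_mul_of_nonneg_right hn.le hterm

lemma summable_of_prod_bound {F : ℕ × ℕ → ℂ} (G H : ℕ → ℝ)
    (hG : Summable G) (hH : Summable H) (hG0 : ∀ i, 0 ≤ G i) (hH0 : ∀ j, 0 ≤ H j)
    (hb : ∀ p : ℕ × ℕ, ‖F p‖ ≤ G p.1 * H p.2) : Summable F :=
  Summable.of_norm_bounded (hG.mul_of_nonneg hH hG0 hH0) hb

lemma summable_F (q ω : ℂ) (hq : ‖q‖ < 1) :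
    Summable (fun p : ℕ × ℕ =>
      ω ^ p.2 * q ^ (p.1 ^ 2 + 2 * p.1 * p.2 + 2 * p.2 ^ 2 + p.1 + p.2) /
        (qPoch (q ^ 2) (q ^ 2) p.1 * qPoch (q ^ 2) (q ^ 2) p.2)) := by
  have hr0 : (0 : ℝ) ≤ ‖q‖ := norm_nonneg q
  have hw0 : (0 : ℝ) ≤ ‖ω‖ := norm_nonneg ω
  have h3 : ‖q‖ ^ 2 < 1 := pow_lt_one₀ hr0 hq (by norm_num)
  have hc : (0 : ℝ) < 1 - ‖q‖ ^ 2 := by linarith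
  have h5 : (0 : ℝ) ≤ ‖q‖ / (1 - ‖q‖ ^ 2) := div_nonneg hr0 hc.le
  have h6 : (0 : ℝ) ≤ ‖ω‖ * ‖q‖ / (1 - ‖q‖ ^ 2) :=
    div_nonneg (mul_nonneg hw0 hr0) hc.le
  have hG : Summable (fun i : ℕ =>
      (‖q‖ / (1 - ‖q‖ ^ 2)) ^ i * ‖q‖ ^ (i ^ 2)) :=
    summable_gauss _ _ h5 hr0 hq
  have hH : Summable (fun j : ℕ =>
      (‖ω‖ * ‖q‖ / (1 - ‖q‖ ^ 2)) ^ j *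
        ‖q‖ ^ (j ^ 2)) :=
    summable_gauss _ _ h6 hr0 hq
  apply summable_of_prod_bound _ _ hG hH
    (fun i => mul_nonneg (pow_nonneg h5 i) (pow_nonneg hr0 _))
    (fun j => mul_nonneg (pow_nonneg h6 j) (pow_nonneg hr0 _))
  rintro ⟨i, j⟩
  have hPi := qPoch_sq_norm_ge hq i
  have hPj := qPoch_sq_norm_ge hq j
  have hexp : i ^ 2 + i + (j ^ 2 + j) ≤ i ^ 2 + 2 * i * j + 2 * j ^ 2 + i + j := by
    calc i ^ 2 + i + (j ^ 2 + j) ≤ i ^ 2 + i + (j ^ 2 + j) + (2 * i * j + j ^ 2) :=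
          Nat.le_add_right _ _
      _ = i ^ 2 + 2 * i * j + 2 * j ^ 2 + i + j := by ring
  show ‖ω ^ j * q ^ (i ^ 2 + 2 * i * j + 2 * j ^ 2 + i + j) /
      (qPoch (q ^ 2) (q ^ 2) i * qPoch (q ^ 2) (q ^ 2) j)‖ ≤ _
  rw [norm_div, norm_mul, norm_mul, norm_pow, norm_pow]
  calc ‖ω‖ ^ j * ‖q‖ ^ (i ^ 2 + 2 * i * j + 2 * j ^ 2 + i + j) /
        (‖qPoch (q ^ 2) (q ^ 2) i‖ * ‖qPoch (q ^ 2) (q ^ 2) j‖)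
      ≤ ‖ω‖ ^ j * ‖q‖ ^ (i ^ 2 + i + (j ^ 2 + j)) /
          ((1 - ‖q‖ ^ 2) ^ i * (1 - ‖q‖ ^ 2) ^ j) := by
        apply div_le_div₀
          (mul_nonneg (pow_nonneg hw0 j) (pow_nonneg hr0 _))
          (mul_le_mul_of_nonneg_left
            (pow_le_pow_of_le_one hr0 hq.le hexp) (pow_nonneg hw0 j))
          (mul_pos (pow_pos hc i) (pow_pos hc j))
          (mul_le_mul hPi hPj (pow_nonneg hc.le j) (norm_nonneg _))
    _ = ((‖q‖ / (1 - ‖q‖ ^ 2)) ^ i * ‖q‖ ^ (i ^ 2)) *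
          ((‖ω‖ * ‖q‖ / (1 - ‖q‖ ^ 2)) ^ j *
            ‖q‖ ^ (j ^ 2)) := by
        rw [div_pow, div_pow, mul_pow (‖ω‖) (‖q‖) j,
          pow_add (‖q‖) (i ^ 2 + i) (j ^ 2 + j),
          pow_add (‖q‖) (i ^ 2) i, pow_add (‖q‖) (j ^ 2) j]
        field_simp

end Stmt11Aux

theorem stmt11 (q ω : ℂ) (hq : ‖q‖ < 1) :
    ∑' n₁ : ℕ, ∑' n₂ : ℕ,
        ω ^ n₂ * q ^ (n₁ ^ 2 + 2 * n₁ * n₂ + 2 * n₂ ^ 2 + n₁ + n₂) /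
          (qPoch (q ^ 2) (q ^ 2) n₁ * qPoch (q ^ 2) (q ^ 2) n₂)
      = ∑' n : ℕ, q ^ (n ^ 2 + n) * qPoch (-(ω * q)) (q ^ 2) n / qPoch (q ^ 2) (q ^ 2) n := by
  classical
  open Stmt11Aux in
  set F : ℕ × ℕ → ℂ := fun p =>
    ω ^ p.2 * q ^ (p.1 ^ 2 + 2 * p.1 * p.2 + 2 * p.2 ^ 2 + p.1 + p.2) /
      (qPoch (q ^ 2) (q ^ 2) p.1 * qPoch (q ^ 2) (q ^ 2) p.2) with hFdef
  have hF : Summable F := Stmt11Aux.summable_F q ω hq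
  have hPne : ∀ m : ℕ, qPoch (q ^ 2) (q ^ 2) m ≠ 0 := fun m => Stmt11Aux.qPoch_sq_ne_zero hq m
  -- the q-binomial step
  have qbin : ∀ n : ℕ, ∑ k ∈ Finset.range (n + 1),
        ω ^ k * q ^ (k ^ 2) / (qPoch (q ^ 2) (q ^ 2) (n - k) * qPoch (q ^ 2) (q ^ 2) k)
      = qPoch (-(ω * q)) (q ^ 2) n / qPoch (q ^ 2) (q ^ 2) n := by
    intro n
    rw [Stmt11Aux.lemA q ω n, Finset.sum_div]
    apply Finset.sum_congr rfl
    intro k hk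
    rw [Finset.mem_range] at hk
    have h1 := Stmt11Aux.lemB (q ^ 2) n k (by omega)
    have h2 := hPne k
    have h3 := hPne (n - k)
    have h4 := hPne n
    field_simp
    linear_combination (-(q ^ (k ^ 2)) * ω ^ k) * h1
  have key : ∀ n : ℕ, ∑ p ∈ Finset.HasAntidiagonal.antidiagonal n, F p
      = q ^ (n ^ 2 + n) * qPoch (-(ω * q)) (q ^ 2) n / qPoch (q ^ 2) (q ^ 2) n := by
    intro n
    rw [← Finset.Nat.sum_antidiagonal_swap]
    rw [Finset.Nat.sum_antidiagonal_eq_sum_range_succ_mk (fun p => F p.swap) n]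
    have hterm : ∀ k ∈ Finset.range (n + 1), F (Prod.swap (k, n - k))
        = q ^ (n ^ 2 + n) *
          (ω ^ k * q ^ (k ^ 2) /
            (qPoch (q ^ 2) (q ^ 2) (n - k) * qPoch (q ^ 2) (q ^ 2) k)) := by
      intro k hk
      rw [Finset.mem_range] at hk
      have hk' : k ≤ n := by omega
      obtain ⟨m, rfl⟩ := Nat.le.dest hk'
      show ω ^ k * q ^ ((k + m - k) ^ 2 + 2 * (k + m - k) * k + 2 * k ^ 2 + (k + m - k) + k) /
          (qPoch (q ^ 2) (q ^ 2) (k + m - k) * qPoch (q ^ 2) (q ^ 2) k) = _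
      simp only [Nat.add_sub_cancel_left]
      rw [show m ^ 2 + 2 * m * k + 2 * k ^ 2 + m + k
          = ((k + m) ^ 2 + (k + m)) + k ^ 2 from by ring, pow_add]
      ring
    rw [Finset.sum_congr rfl hterm, ← Finset.mul_sum, qbin n, mul_div_assoc]
  have hF2 : Summable (fun x : (Σ n : ℕ, (Finset.HasAntidiagonal.antidiagonal n : Finset (ℕ × ℕ))) =>
      F (x.2 : ℕ × ℕ)) :=
    hF.comp_injective Finset.HasAntidiagonal.sigmaAntidiagonalEquivProd.injective
  calc ∑' n₁ : ℕ, ∑' n₂ : ℕ,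
        ω ^ n₂ * q ^ (n₁ ^ 2 + 2 * n₁ * n₂ + 2 * n₂ ^ 2 + n₁ + n₂) /
          (qPoch (q ^ 2) (q ^ 2) n₁ * qPoch (q ^ 2) (q ^ 2) n₂)
      = ∑' p : ℕ × ℕ, F p := by
        rw [Summable.tsum_prod' hF hF.prod_factor]
    _ = ∑' x : (Σ n : ℕ, (Finset.HasAntidiagonal.antidiagonal n : Finset (ℕ × ℕ))), F (x.2 : ℕ × ℕ) :=
        (Finset.HasAntidiagonal.sigmaAntidiagonalEquivProd.tsum_eq F).symm
    _ = ∑' n : ℕ, ∑' p : (Finset.HasAntidiagonal.antidiagonal n : Finset (ℕ × ℕ)), F (p : ℕ × ℕ) :=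
        Summable.tsum_sigma hF2
    _ = ∑' n : ℕ, ∑ p ∈ Finset.HasAntidiagonal.antidiagonal n, F p :=
        tsum_congr fun n => Finset.tsum_subtype _ F
    _ = ∑' n : ℕ, q ^ (n ^ 2 + n) * qPoch (-(ω * q)) (q ^ 2) n / qPoch (q ^ 2) (q ^ 2) n :=
        tsum_congr key
end

section
/- If (α_n, β_n) is a Bailey pair relative to 1, i.e. β_n = ∑_{i=0}^n α_i / ((q;q)_{n-i} (q;q)_{n+i}) for all n ≥ 0, then the pair (α'_n, β'_n) with α'_n = q^{n²/2} α_n and β'_n = ∑_{i=0}^n (−√q;q)_i q^{i²/2} β_i / ((q;q)_{n-i} (−√q;q)_n) is also a Bailey pair relative to 1. -/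
open scoped BigOperators

open Finset

def tri : ℕ → ℕ
  | 0 => 0
  | n + 1 => tri n + n

noncomputable def Cq (q : ℂ) : ℕ → ℕ → ℂ
  | 0, 0 => 1
  | 0, _ + 1 => 0
  | _ + 1, 0 => 1
  | m + 1, k + 1 => Cq q m (k + 1) + q ^ (m - k) * Cq q m k

lemma qPoch_zero (a q : ℂ) : qPoch a q 0 = 1 := by simp [qPoch]

lemma qPoch_succ (a q : ℂ) (n : ℕ) :
    qPoch a q (n + 1) = qPoch a q n * (1 - a * q ^ n) := by
  simp [qPoch, Finset.prod_range_succ]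

lemma qPoch_succ' (a q : ℂ) (n : ℕ) :
    qPoch a q (n + 1) = (1 - a) * qPoch (a * q) q n := by
  rw [qPoch, Finset.prod_range_succ', pow_zero, mul_one, mul_comm]
  congr 1
  rw [qPoch]
  apply Finset.prod_congr rfl
  intro j _
  ring

lemma qPoch_add (a q : ℂ) (m n : ℕ) :
    qPoch a q (m + n) = qPoch a q m * qPoch (a * q ^ m) q n := by
  simp only [qPoch, Finset.prod_range_add]
  congr 1
  apply Finset.prod_congr rfl
  intro j _
  rw [mul_assoc, ← pow_add]

lemma Cq_zero_right (q : ℂ) (m : ℕ) : Cq q m 0 = 1 := by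
  cases m <;> rfl

lemma Cq_eq_zero (q : ℂ) : ∀ m k : ℕ, m < k → Cq q m k = 0 := by
  intro m
  induction m with
  | zero => intro k hk; match k, hk with | (k+1), _ => rfl
  | succ m ih =>
    intro k hk
    match k, hk with
    | (k+1), hk =>
      show Cq q m (k + 1) + q ^ (m - k) * Cq q m k = 0
      rw [ih (k+1) (by omega), ih k (by omega)]
      ring

lemma Cq_self (q : ℂ) : ∀ m : ℕ, Cq q m m = 1 := by
  intro m
  induction m with
  | zero => rfl
  | succ m ih =>
    show Cq q m (m + 1) + q ^ (m - m) * Cq q m m = 1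
    rw [Cq_eq_zero q m (m+1) (by omega), ih]
    simp

lemma Cq_mul (q : ℂ) : ∀ m k : ℕ, k ≤ m →
    qPoch q q k * qPoch q q (m - k) * Cq q m k = qPoch q q m := by
  intro m
  induction m with
  | zero => intro k hk; interval_cases k; simp [qPoch, Cq]
  | succ m ih =>
    intro k hk
    match k with
    | 0 => simp [Cq_zero_right, qPoch_zero]
    | (k+1) =>
      show qPoch q q (k+1) * qPoch q q (m + 1 - (k+1)) * (Cq q m (k + 1) + q ^ (m - k) * Cq q m k) = _
      have hk' : k ≤ m := by omega
      rcases eq_or_lt_of_le hk' with h | h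
      · subst h
        rw [Cq_eq_zero q k (k+1) (by omega), Cq_self]
        simp [qPoch_zero]
      · -- k < m
        have h1 : m + 1 - (k + 1) = (m - (k+1)) + 1 := by omega
        have h2 : qPoch q q ((m - (k+1)) + 1) = qPoch q q (m - (k+1)) * (1 - q ^ (m - k)) := by
          rw [qPoch_succ]
          congr 2
          rw [← pow_succ']
          congr 1
          omega
        have h3 : qPoch q q (k + 1) = qPoch q q k * (1 - q ^ (k+1)) := by
          rw [qPoch_succ, ← pow_succ']
        have h6 : qPoch q q (m - k) = qPoch q q (m - (k+1)) * (1 - q ^ (m-k)) := by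
          conv_lhs => rw [show m - k = (m - (k+1)) + 1 by omega, qPoch_succ]
          congr 2
          rw [← pow_succ']
          congr 1
          omega
        have e1 := ih (k+1) (by omega)
        have e2 := ih k hk'
        have hq : q ^ (m-k) * q ^ (k+1) = q ^ (m+1) := by
          rw [← pow_add]; congr 1; omega
        rw [qPoch_succ q q m, show q * q ^ m = q ^ (m+1) by rw [← pow_succ']]
        rw [h1, h2]
        rw [h3] at e1 ⊢
        rw [h6] at e2
        linear_combination (1 - q^(m-k)) * e1 + q^(m-k) * (1 - q^(k+1)) * e2 - qPoch q q m * hq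

lemma lemA (q b : ℂ) : ∀ (m r : ℕ),
    ∑ k ∈ range (m+1), Cq q m k * qPoch (-(b * q^r)) q k * b^k * q^(tri k)
      * qPoch (b^2 * q^(k+r)) q (m-k) = qPoch (-b) q m := by
  intro m
  induction m with
  | zero =>
    intro r
    simp [Cq_zero_right, qPoch_zero, tri]
  | succ m ih =>
    intro r
    rw [Finset.sum_range_succ']
    -- abbreviations
    set b2 := b^2 with hb2
    have hCq0 : Cq q (m+1) 0 = 1 := Cq_zero_right q (m+1)
    -- split each shifted summand
    have hsplit : ∀ k ∈ range (m+1),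
        Cq q (m+1) (k+1) * qPoch (-(b * q^r)) q (k+1) * b^(k+1) * q^(tri (k+1))
          * qPoch (b2 * q^(k+1+r)) q (m+1-(k+1))
        = (Cq q m (k+1) * qPoch (-(b * q^r)) q (k+1) * b^(k+1) * q^(tri (k+1))
            * qPoch (b2 * q^(k+1+r)) q (m-k))
          + (b * q^m * (1 + b * q^r))
            * (Cq q m k * qPoch (-(b * q^(r+1))) q k * b^k * q^(tri k)
                * qPoch (b2 * q^(k+(r+1))) q (m-k)) := by
      intro k hk
      rw [mem_range] at hk
      have h1 : Cq q (m+1) (k+1) = Cq q m (k+1) + q ^ (m - k) * Cq q m k := rfl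
      have h2 : m + 1 - (k+1) = m - k := by omega
      have h3 : qPoch (-(b * q^r)) q (k+1) = (1 + b * q^r) * qPoch (-(b * q^(r+1))) q k := by
        rw [qPoch_succ']
        congr 2
        · ring
        · rw [pow_succ]; ring
      have h4 : tri (k+1) = tri k + k := rfl
      have h5 : q ^ (m-k) * q ^ (tri k + k) = q ^ m * q ^ (tri k) := by
        rw [← pow_add, ← pow_add]
        congr 1
        omega
      have h6 : (k+1+r) = (k+(r+1)) := by omega
      rw [h1, h2, h3, h4, h6]
      rw [pow_add q (tri k) k]
      linear_combination (Cq q m k * (1 + b * q^r) * qPoch (-(b * q^(r+1))) q k * b^(k+1)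
        * qPoch (b2 * q^(k+(r+1))) q (m-k)) * h5
    rw [Finset.sum_congr rfl hsplit, Finset.sum_add_distrib, ← Finset.mul_sum]
    rw [ih (r+1)]
    -- now handle the first part plus the k=0 term
    have hre : (∑ k ∈ range (m+1),
        Cq q m (k+1) * qPoch (-(b * q^r)) q (k+1) * b^(k+1) * q^(tri (k+1))
          * qPoch (b2 * q^(k+1+r)) q (m-k))
        + (Cq q (m+1) 0 * qPoch (-(b * q^r)) q 0 * b^0 * q^(tri 0)
            * qPoch (b2 * q^(0+r)) q (m+1-0))
        = ∑ k ∈ range (m+2),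
            Cq q m k * qPoch (-(b * q^r)) q k * b^k * q^(tri k)
              * qPoch (b2 * q^(k+r)) q (m+1-k) := by
      rw [Finset.sum_range_succ' _ (m+1)]
      congr 1
      · apply Finset.sum_congr rfl
        intro k hk
        rw [mem_range] at hk
        congr 2
        omega
      · rw [hCq0, Cq_zero_right]
    have hlast : ∑ k ∈ range (m+2),
        Cq q m k * qPoch (-(b * q^r)) q k * b^k * q^(tri k)
          * qPoch (b2 * q^(k+r)) q (m+1-k)
        = (1 - b2 * q^(m+r)) * qPoch (-b) q m := by
      rw [Finset.sum_range_succ, Cq_eq_zero q m (m+1) (by omega)]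
      simp only [zero_mul, mul_zero, zero_mul, add_zero]
      have : ∀ k ∈ range (m+1),
          Cq q m k * qPoch (-(b * q^r)) q k * b^k * q^(tri k)
            * qPoch (b2 * q^(k+r)) q (m+1-k)
          = (1 - b2 * q^(m+r)) * (Cq q m k * qPoch (-(b * q^r)) q k * b^k * q^(tri k)
              * qPoch (b2 * q^(k+r)) q (m-k)) := by
        intro k hk
        rw [mem_range] at hk
        have h2 : m + 1 - k = (m - k) + 1 := by omega
        rw [h2, qPoch_succ]
        have h7 : b2 * q ^ (k+r) * q ^ (m-k) = b2 * q^(m+r) := by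
          rw [mul_assoc, ← pow_add]
          congr 2
          omega
        rw [h7]
        ring
      rw [Finset.sum_congr rfl this, ← Finset.mul_sum, ih r]
    rw [add_right_comm, hre, hlast, qPoch_succ]
    have hqq : q^(m+r) = q^m * q^r := pow_add q m r
    linear_combination qPoch (-b) q m * b ^ 2 * hqq

lemma sq_expand : ∀ (j k : ℕ), (j + k)^2 = j^2 + k + 2*(j*k) + 2*tri k := by
  intro j k
  induction k with
  | zero => simp [tri]
  | succ k ih =>
    have h : tri (k+1) = tri k + k := rfl
    rw [h]
    ring_nf
    ring_nf at ih
    omega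

lemma qPoch_ne_zero (a q : ℂ) (ha : ‖a‖ < 1) (hq : ‖q‖ ≤ 1) (n : ℕ) :
    qPoch a q n ≠ 0 := by
  rw [qPoch]
  apply Finset.prod_ne_zero_iff.mpr
  intro j _
  intro hzero
  have h : a * q ^ j = 1 := by linear_combination -hzero
  have habs : ‖a * q ^ j‖ = 1 := by rw [h]; simp
  rw [norm_mul, norm_pow] at habs
  have h2 : ‖q‖ ^ j ≤ 1 := pow_le_one₀ (norm_nonneg q) hq
  nlinarith [norm_nonneg a, norm_nonneg (q^j), norm_pow q j]

lemma kernel (q s : ℂ) (h1 : ‖q‖ < 1) (hs : s ^ 2 = q) (j n : ℕ) (hj : j ≤ n) :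
    ∑ i ∈ Finset.Ico j (n+1), qPoch (-s) q i * s ^ (i^2) /
        (qPoch q q (n-i) * qPoch q q (i-j) * qPoch q q (i+j))
      = qPoch (-s) q n * s ^ (j^2) / (qPoch q q (n-j) * qPoch q q (n+j)) := by
  have hq1 : ‖q‖ ≤ 1 := le_of_lt h1
  have qq_ne : ∀ t : ℕ, qPoch q q t ≠ 0 := qPoch_ne_zero q q h1 hq1
  set m := n - j with hmdef
  rw [Finset.sum_Ico_eq_sum_range]
  have hm : n + 1 - j = m + 1 := by omega
  rw [hm]
  have hA := lemA q (s * q^j) m 0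
  simp only [pow_zero, mul_one, add_zero] at hA
  set C := qPoch (-s) q j * s^(j^2) / (qPoch q q m * qPoch q q (n+j)) with hC
  have hterm : ∀ k ∈ range (m+1),
      qPoch (-s) q (j+k) * s ^ ((j+k)^2) /
        (qPoch q q (n-(j+k)) * qPoch q q (j+k-j) * qPoch q q (j+k+j))
      = C * (Cq q m k * qPoch (-(s * q^j)) q k * (s * q^j)^k * q^(tri k)
          * qPoch ((s * q^j)^2 * q^k) q (m-k)) := by
    intro k hk
    rw [mem_range] at hk
    have hk' : k ≤ m := by omega
    have hi1 : n - (j+k) = m - k := by omega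
    have hi2 : j + k - j = k := by omega
    rw [hi1, hi2]
    have hA1 : qPoch (-s) q (j+k) = qPoch (-s) q j * qPoch (-(s * q^j)) q k := by
      rw [qPoch_add]
      congr 2
      ring
    have hA2 : s ^ ((j+k)^2) = s^(j^2) * ((s * q^j)^k * q^(tri k)) := by
      calc s ^ ((j+k)^2) = s^(j^2) * s^k * (s^2)^(j*k) * (s^2)^(tri k) := by
            rw [sq_expand, pow_add, pow_add, pow_add, pow_mul, pow_mul, pow_mul]
        _ = s^(j^2) * ((s * q^j)^k * q^(tri k)) := by
            rw [hs, mul_pow, ← pow_mul]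
            ring
    have e : (s * q^j)^2 * q^k = q * q^(j+k+j) := by
      rw [pow_add, pow_add, ← hs]
      ring
    have hA3 : qPoch q q (n+j) = qPoch q q (j+k+j) * qPoch ((s * q^j)^2 * q^k) q (m-k) := by
      rw [show n + j = (j+k+j) + (m-k) by omega, qPoch_add, ← e]
    have hA4 := Cq_mul q m k hk'
    rw [hA1, hA2, hC]
    rw [div_mul_eq_mul_div, div_eq_div_iff
      (mul_ne_zero (mul_ne_zero (qq_ne _) (qq_ne _)) (qq_ne _))
      (mul_ne_zero (qq_ne _) (qq_ne _))]
    rw [hA3, ← hA4]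
    ring
  rw [Finset.sum_congr rfl hterm, ← Finset.mul_sum, hA]
  have hsplitn : qPoch (-s) q n = qPoch (-s) q j * qPoch (-(s * q^j)) q m := by
    rw [show n = j + m by omega, qPoch_add]
    congr 2
    ring
  rw [hsplitn, hC]
  ring

theorem stmt12 (q s : ℂ) (h0 : 0 < ‖q‖) (h1 : ‖q‖ < 1)
    (hs : s ^ 2 = q) (α β : ℕ → ℂ)
    (hpair : ∀ n : ℕ, β n =
      ∑ i ∈ Finset.range (n + 1), α i / (qPoch q q (n - i) * qPoch q q (n + i))) :
    ∀ n : ℕ,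
      (∑ i ∈ Finset.range (n + 1),
        qPoch (-s) q i * s ^ (i ^ 2) * β i / (qPoch q q (n - i) * qPoch (-s) q n))
      = ∑ i ∈ Finset.range (n + 1),
          (s ^ (i ^ 2) * α i) / (qPoch q q (n - i) * qPoch q q (n + i)) := by
  intro n
  have hq1 : ‖q‖ ≤ 1 := le_of_lt h1
  have qq_ne : ∀ t : ℕ, qPoch q q t ≠ 0 := qPoch_ne_zero q q h1 hq1
  have habs_s : ‖s‖ < 1 := by
    have h2 : ‖s‖ ^ 2 = ‖q‖ := by rw [← norm_pow, hs]
    nlinarith [norm_nonneg s]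
  have hPn : qPoch (-s) q n ≠ 0 := qPoch_ne_zero (-s) q (by simpa using habs_s) hq1 n
  set g : ℕ → ℕ → ℂ := fun i j => (α j / qPoch (-s) q n) *
    (qPoch (-s) q i * s ^ (i^2) / (qPoch q q (n-i) * qPoch q q (i-j) * qPoch q q (i+j)))
    with hg
  have step1 : ∀ i ∈ range (n+1),
      qPoch (-s) q i * s ^ (i ^ 2) * β i / (qPoch q q (n - i) * qPoch (-s) q n)
      = ∑ j ∈ range (i+1), g i j := by
    intro i _
    rw [hpair i, Finset.mul_sum, Finset.sum_div]
    apply Finset.sum_congr rfl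
    intro j _
    rw [hg]
    ring
  rw [Finset.sum_congr rfl step1]
  have swap : ∑ i ∈ range (n+1), ∑ j ∈ range (i+1), g i j
      = ∑ j ∈ range (n+1), ∑ i ∈ Finset.Ico j (n+1), g i j := by
    have h := (Finset.sum_Ico_Ico_comm 0 (n+1) (fun a c => g c a)).symm
    simp only [Nat.Ico_zero_eq_range] at h
    exact h
  rw [swap]
  apply Finset.sum_congr rfl
  intro j hj
  rw [mem_range] at hj
  have hj' : j ≤ n := by omega
  rw [show (∑ i ∈ Finset.Ico j (n+1), g i j)
      = (α j / qPoch (-s) q n) * ∑ i ∈ Finset.Ico j (n+1),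
          qPoch (-s) q i * s ^ (i^2) / (qPoch q q (n-i) * qPoch q q (i-j) * qPoch q q (i+j))
    from by rw [Finset.mul_sum]]
  rw [kernel q s h1 hs j n hj']
  field_simp
end
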